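/- arXiv:2208.13256 — 3 statements merged into one kernel-verified Lean document; each statement's English description precedes it below -/
import Mathlib

section
/- Let J be a nonempty finite index set, y : J → ℝ with yⱼ ≥ 0 for all j, and let Γ be a real number with 0 ≤ Γ ≤ |J|. Then sup { Σⱼ uⱼ yⱼ : u : J → ℝ, 0 ≤ uⱼ ≤ 1 for all j, Σⱼ uⱼ ≤ Γ } equals the sum of the ⌊Γ⌋ largest values among (yⱼ)ⱼ∈J plus (Γ − ⌊Γ⌋) times the (⌊Γ⌋+1)-st largest value (where the (⌊Γ⌋+1)-st largest value is taken to be 0 if ⌊Γ⌋ = |J|). In particular, the supremum is attained. -/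
/-!
Order `J` by decreasing weight via `e`. The greedy vector `g` puts `1` on the first `⌊Γ⌋`
positions, `Γ - ⌊Γ⌋` on the next one and `0` elsewhere; it is feasible, has `∑ g = Γ`, and its
objective is the claimed value. If `c` is the `(⌊Γ⌋+1)`-st largest weight, then for any feasible
`u` every term `(gᵢ - uᵢ)(wᵢ - c)` is nonnegative (`g` is `1` above the threshold and `0` below
it), so `∑ (gᵢ - uᵢ) wᵢ ≥ c (∑ g - ∑ u) ≥ 0`.
-/

open Finset

theorem sum_mul_le_sum_mul_of_sub_mul_sub_nonneg {ι R : Type*} [Fintype ι] [CommRing R]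
    [PartialOrder R] [IsOrderedRing R] (g u w : ι → R) {c : R}
    (hc : 0 ≤ c) (hsum : ∑ i, u i ≤ ∑ i, g i) (hcross : ∀ i, 0 ≤ (g i - u i) * (w i - c)) :
    ∑ i, u i * w i ≤ ∑ i, g i * w i := by
  have hsplit : ∑ i, g i * w i - ∑ i, u i * w i
      = ∑ i, (g i - u i) * (w i - c) + c * (∑ i, g i - ∑ i, u i) := by
    simp only [← sum_sub_distrib, mul_sum, ← sum_add_distrib]
    exact sum_congr rfl fun i _ => by ring
  refine sub_nonneg.mp (hsplit ▸ add_nonneg (sum_nonneg fun i _ => hcross i) ?_)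
  exact mul_nonneg hc (sub_nonneg.mpr hsum)

theorem Fin.sum_ite_val_eq {M : Type*} [AddCommMonoid M] {n : ℕ} (k : ℕ) (f : Fin n → M) :
    ∑ i : Fin n, (if (i : ℕ) = k then f i else 0) = if h : k < n then f ⟨k, h⟩ else 0 := by
  split_ifs with h
  · rw [← Fintype.sum_ite_eq' (⟨k, h⟩ : Fin n) f]
    simp only [Fin.ext_iff]
  · exact sum_eq_zero fun i _ => if_neg (by omega)

noncomputable def greedyFill (Γ : ℝ) {n : ℕ} (i : Fin n) : ℝ :=
  if (i : ℕ) < ⌊Γ⌋₊ then 1 else if (i : ℕ) = ⌊Γ⌋₊ then Γ - ⌊Γ⌋₊ else 0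

section greedyFill

variable {Γ : ℝ} {n : ℕ}

theorem greedyFill_nonneg (hΓ0 : 0 ≤ Γ) (i : Fin n) : 0 ≤ greedyFill Γ i := by
  have := Nat.floor_le hΓ0
  unfold greedyFill
  split_ifs <;> linarith

theorem greedyFill_le_one (i : Fin n) : greedyFill Γ i ≤ 1 := by
  have := Nat.lt_floor_add_one Γ
  unfold greedyFill
  split_ifs <;> linarith

theorem sum_greedyFill_mul (w : Fin n → ℝ) :
    ∑ i, greedyFill Γ i * w i =
      (∑ i : Fin n, if (i : ℕ) < ⌊Γ⌋₊ then w i else 0) +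
        (Γ - ⌊Γ⌋₊) * (if h : ⌊Γ⌋₊ < n then w ⟨⌊Γ⌋₊, h⟩ else 0) := by
  have hsplit : ∀ i : Fin n, greedyFill Γ i * w i =
      (if (i : ℕ) < ⌊Γ⌋₊ then w i else 0) + if (i : ℕ) = ⌊Γ⌋₊ then (Γ - ⌊Γ⌋₊) * w i else 0 := by
    intro i
    unfold greedyFill
    split_ifs <;> first | omega | ring
  rw [sum_congr rfl fun i _ => hsplit i, sum_add_distrib, Fin.sum_ite_val_eq, mul_dite, mul_zero]

theorem sum_greedyFill (hΓ0 : 0 ≤ Γ) (hΓ : Γ ≤ n) : ∑ i : Fin n, greedyFill Γ i = Γ := by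
  have hk : ⌊Γ⌋₊ ≤ n := Nat.floor_le_of_le hΓ
  have := sum_greedyFill_mul (Γ := Γ) (fun _ : Fin n => (1 : ℝ))
  simp only [mul_one, sum_boole, Fin.card_filter_val_lt, min_eq_right hk, dite_eq_ite] at this
  rw [this]
  split_ifs with hlt
  · ring
  · have : (⌊Γ⌋₊ : ℝ) = n := by exact_mod_cast le_antisymm hk (not_lt.mp hlt)
    linarith [Nat.floor_le hΓ0]

theorem greedyFill_sub_mul_sub_nonneg {w u : Fin n → ℝ} (hw : Antitone w) (hw0 : ∀ i, 0 ≤ w i)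
    (hu : ∀ i, 0 ≤ u i ∧ u i ≤ 1) (i : Fin n) :
    0 ≤ (greedyFill Γ i - u i) * (w i - if h : ⌊Γ⌋₊ < n then w ⟨⌊Γ⌋₊, h⟩ else 0) := by
  rcases lt_trichotomy (i : ℕ) ⌊Γ⌋₊ with hlt | heq | hgt
  · have hg : greedyFill Γ i = 1 := if_pos hlt
    refine mul_nonneg (by linarith [(hu i).2]) (sub_nonneg.mpr ?_)
    split_ifs with hk
    · exact hw (Fin.le_def.mpr hlt.le)
    · exact hw0 i
  · have hk : ⌊Γ⌋₊ < n := heq ▸ i.isLt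
    have hi : (⟨⌊Γ⌋₊, hk⟩ : Fin n) = i := Fin.ext heq.symm
    simp [hk, hi]
  · have hk : ⌊Γ⌋₊ < n := hgt.trans i.isLt
    have hg : greedyFill Γ i = 0 := by simp [greedyFill, hgt.not_gt, hgt.ne']
    rw [dif_pos hk]
    exact mul_nonneg_of_nonpos_of_nonpos (by linarith [(hu i).1])
      (sub_nonpos.mpr (hw (Fin.le_def.mpr hgt.le)))

end greedyFill

theorem protection_function_value_general
    (J : Type) [Fintype J] (y : J → ℝ) (hy : ∀ j, 0 ≤ y j)
    (Γ : ℝ) (hΓ0 : 0 ≤ Γ) (hΓ : Γ ≤ (Fintype.card J : ℝ))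
    (e : Fin (Fintype.card J) ≃ J)
    (he : ∀ i i' : Fin (Fintype.card J), i ≤ i' → y (e i') ≤ y (e i)) :
    IsGreatest
      { s : ℝ | ∃ u : J → ℝ, (∀ j, 0 ≤ u j ∧ u j ≤ 1) ∧ (∑ j, u j) ≤ Γ ∧
          s = ∑ j, u j * y j }
      ((∑ i : Fin (Fintype.card J), if (i : ℕ) < ⌊Γ⌋₊ then y (e i) else 0) +
        (Γ - ⌊Γ⌋₊) *
          (if h : ⌊Γ⌋₊ < Fintype.card J then y (e ⟨⌊Γ⌋₊, h⟩) else 0)) := by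
  rw [← sum_greedyFill_mul fun i => y (e i)]
  refine ⟨⟨fun j => greedyFill Γ (e.symm j),
    fun j => ⟨greedyFill_nonneg hΓ0 _, greedyFill_le_one _⟩, ?_, ?_⟩, ?_⟩
  · rw [← e.sum_comp]
    simpa using (sum_greedyFill hΓ0 hΓ).le
  · rw [← e.sum_comp]
    simp
  · rintro _ ⟨u, hu, hsum, rfl⟩
    rw [← e.sum_comp]
    refine sum_mul_le_sum_mul_of_sub_mul_sub_nonneg _ (u ∘ e) (y ∘ e) ?_ ?_
      (greedyFill_sub_mul_sub_nonneg he (fun i => hy (e i)) (fun i => hu (e i)))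
    · split_ifs
      exacts [hy _, le_rfl]
    · simpa [sum_greedyFill hΓ0 hΓ, e.sum_comp] using hsum

/-- Bertsimas–Sim protection function: for nonnegative weights `y` over a
nonempty finite index set `J` and a budget `Γ ∈ [0, |J|]`, the value
`max { ∑ j, u j * y j : 0 ≤ u ≤ 1, ∑ j, u j ≤ Γ }` equals the sum of the
`⌊Γ⌋` largest values of `y` plus `(Γ - ⌊Γ⌋)` times the `(⌊Γ⌋+1)`-st largest
value (taken to be `0` when `⌊Γ⌋ = |J|`); in particular the supremum is
attained.  The decreasing ordering of the values of `y` is encoded by an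
equivalence `e : Fin |J| ≃ J` along which `y` is antitone. -/
theorem protection_function_value
    (J : Type) [Fintype J] [Nonempty J] (y : J → ℝ) (hy : ∀ j, 0 ≤ y j)
    (Γ : ℝ) (hΓ0 : 0 ≤ Γ) (hΓ : Γ ≤ (Fintype.card J : ℝ))
    (e : Fin (Fintype.card J) ≃ J)
    (he : ∀ i i' : Fin (Fintype.card J), i ≤ i' → y (e i') ≤ y (e i)) :
    IsGreatest
      { s : ℝ | ∃ u : J → ℝ, (∀ j, 0 ≤ u j ∧ u j ≤ 1) ∧ (∑ j, u j) ≤ Γ ∧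
          s = ∑ j, u j * y j }
      ((∑ i : Fin (Fintype.card J), if (i : ℕ) < ⌊Γ⌋₊ then y (e i) else 0) +
        (Γ - ⌊Γ⌋₊) *
          (if h : ⌊Γ⌋₊ < Fintype.card J then y (e ⟨⌊Γ⌋₊, h⟩) else 0)) :=
  protection_function_value_general J y hy Γ hΓ0 hΓ e he
end

section
/- Let J be a finite index set, y : J → ℝ with yⱼ ≥ 0 for all j, and Γ ≥ 0 a real number. Then max { Σⱼ uⱼ yⱼ : u : J → ℝ, 0 ≤ uⱼ ≤ 1 for all j, Σⱼ uⱼ ≤ Γ } = inf { z·Γ + Σⱼ pⱼ : z ∈ ℝ, p : J → ℝ, z ≥ 0, pⱼ ≥ 0 and z + pⱼ ≥ yⱼ for all j }, and the infimum is attained (e.g., by taking z equal to a suitable value among {0} ∪ {yⱼ} and pⱼ = max(yⱼ − z, 0)). -/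
/-!
The maximum of the linear objective over the compact polytope is attained at some `u`.
Moving mass between coordinates of `u` shows that `y i ≤ y j` whenever `u i < 1` and
`0 < u j`, and that `y i ≤ 0` whenever `u i < 1` and the budget is slack. Hence the threshold
`z = max ({0} ∪ {y i | u i < 1})`, with `p j = max (y j - z) 0`, satisfies complementary
slackness with `u`: its dual value equals the primal value, and weak duality gives the rest.
-/

open Finset

section BudgetedUncertainty

variable {J : Type*} [Fintype J]

def budgetPolytope (Γ : ℝ) : Set (J → ℝ) :=
  {u | (∀ j, 0 ≤ u j ∧ u j ≤ 1) ∧ ∑ j, u j ≤ Γ}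

theorem isCompact_budgetPolytope (Γ : ℝ) : IsCompact (budgetPolytope (J := J) Γ) := by
  refine (isCompact_Icc (a := (0 : J → ℝ)) (b := 1)).of_isClosed_subset ?_
    fun u hu => ⟨fun j => (hu.1 j).1, fun j => (hu.1 j).2⟩
  have hbox : IsClosed {u : J → ℝ | ∀ j, 0 ≤ u j ∧ u j ≤ 1} := by
    simp only [Set.ofPred_forall]
    exact isClosed_iInter fun j =>
      (isClosed_le continuous_const (continuous_apply j)).inter
        (isClosed_le (continuous_apply j) continuous_const)
  exact hbox.inter
    (isClosed_le (continuous_finsetSum _ fun j _ => continuous_apply j) continuous_const)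

theorem sum_mul_le_of_mem_budgetPolytope {Γ z : ℝ} {u y p : J → ℝ}
    (hu : u ∈ budgetPolytope Γ) (hz : 0 ≤ z) (hp : ∀ j, 0 ≤ p j ∧ y j ≤ z + p j) :
    ∑ j, u j * y j ≤ z * Γ + ∑ j, p j :=
  calc ∑ j, u j * y j ≤ ∑ j, (z * u j + p j) := by
        refine sum_le_sum fun j _ => ?_
        nlinarith [hu.1 j, hp j]
    _ = z * ∑ j, u j + ∑ j, p j := by rw [sum_add_distrib, mul_sum]
    _ ≤ z * Γ + ∑ j, p j := by gcongr; exact hu.2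

theorem exists_isMaxOn_budgetPolytope (y : J → ℝ) {Γ : ℝ} (hΓ : 0 ≤ Γ) :
    ∃ u ∈ budgetPolytope Γ, IsMaxOn (fun v => ∑ j, v j * y j) (budgetPolytope Γ) u :=
  (isCompact_budgetPolytope Γ).exists_isMaxOn ⟨0, fun _ => by simp, by simpa using hΓ⟩
    (by fun_prop)

section IsMaxOn

variable {Γ : ℝ} {u y : J → ℝ}
  (hmax : IsMaxOn (fun v => ∑ j, v j * y j) (budgetPolytope Γ) u)
include hmax

theorem sum_mul_nonpos_of_add_smul_mem {ε : ℝ} {d : J → ℝ} (hε : 0 < ε)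
    (hd : u + ε • d ∈ budgetPolytope Γ) : ∑ j, d j * y j ≤ 0 := by
  have h := hmax hd
  simp only [Set.mem_ofPred_eq, Pi.add_apply, Pi.smul_apply, smul_eq_mul, add_mul,
    sum_add_distrib, mul_assoc, ← mul_sum] at h
  exact nonpos_of_mul_nonpos_right (by linarith) hε

theorem apply_le_apply_of_isMaxOn [DecidableEq J] (hu : u ∈ budgetPolytope Γ) {i j : J}
    (hi : u i < 1) (hj : 0 < u j) : y i ≤ y j := by
  rcases eq_or_ne i j with rfl | hij
  · exact le_rfl
  set ε := min (1 - u i) (u j)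
  have hε : 0 < ε := lt_min (by linarith) hj
  have hεi : ε ≤ 1 - u i := min_le_left _ _
  have hεj : ε ≤ u j := min_le_right _ _
  have hmem : u + ε • (Pi.single i 1 - Pi.single j 1) ∈ budgetPolytope Γ := by
    refine ⟨fun k => ?_, ?_⟩
    · have hk := hu.1 k
      simp only [Pi.add_apply, Pi.smul_apply, Pi.sub_apply, Pi.single_apply, smul_eq_mul]
      split_ifs with hki hkj hkj
      · exact absurd (hki.symm.trans hkj) hij
      all_goals subst_vars; constructor <;> linarith
    · simpa [sum_add_distrib, ← mul_sum] using hu.2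
  simpa [Pi.single_apply, sub_mul, sum_sub_distrib] using
    sum_mul_nonpos_of_add_smul_mem hmax hε hmem

theorem apply_nonpos_of_isMaxOn [DecidableEq J] (hu : u ∈ budgetPolytope Γ) {i : J}
    (hslack : ∑ j, u j < Γ) (hi : u i < 1) : y i ≤ 0 := by
  set ε := min (1 - u i) (Γ - ∑ j, u j)
  have hε : 0 < ε := lt_min (by linarith) (by linarith)
  have hεi : ε ≤ 1 - u i := min_le_left _ _
  have hεΓ : ε ≤ Γ - ∑ j, u j := min_le_right _ _
  have hmem : u + ε • Pi.single i 1 ∈ budgetPolytope Γ := by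
    refine ⟨fun k => ?_, ?_⟩
    · have hk := hu.1 k
      simp only [Pi.add_apply, Pi.smul_apply, Pi.single_apply, smul_eq_mul]
      split_ifs <;> subst_vars <;> constructor <;> linarith
    · have hsum : ∑ k, (u + ε • Pi.single i 1 : J → ℝ) k = ∑ k, u k + ε := by
        simp [sum_add_distrib, ← mul_sum]
      linarith
  simpa [Pi.single_apply] using sum_mul_nonpos_of_add_smul_mem hmax hε hmem

theorem exists_dual_certificate_of_isMaxOn (hy : ∀ j, 0 ≤ y j) (hu : u ∈ budgetPolytope Γ) :
    ∃ (z : ℝ) (p : J → ℝ), 0 ≤ z ∧ (∀ j, 0 ≤ p j ∧ y j ≤ z + p j) ∧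
      ∑ j, u j * y j = z * Γ + ∑ j, p j := by
  classical
  set Z := insert 0 ((univ.filter (u · < 1)).image y)
  set z := Z.max' (insert_nonempty _ _)
  have hz_nonneg : 0 ≤ z := Z.le_max' 0 (mem_insert_self _ _)
  have hz_ge : ∀ i, u i < 1 → y i ≤ z := fun i hi =>
    Z.le_max' _ (mem_insert_of_mem (mem_image_of_mem y (mem_filter.2 ⟨mem_univ i, hi⟩)))
  have hz_mem : z = 0 ∨ ∃ i, u i < 1 ∧ y i = z := by
    simpa [Z, eq_comm] using Z.max'_mem (insert_nonempty _ _)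
  have hz_le : ∀ j, 0 < u j → z ≤ y j := by
    intro j hj
    rcases hz_mem with hz0 | ⟨i, hi, hiz⟩
    · exact hz0 ▸ hy j
    · exact hiz ▸ apply_le_apply_of_isMaxOn hmax hu hi hj
  have hbudget : z * ∑ j, u j = z * Γ := by
    rcases hz_mem with hz0 | ⟨i, hi, hiz⟩
    · rw [hz0, zero_mul, zero_mul]
    rcases hz_nonneg.eq_or_lt with hz0 | hz_pos
    · rw [← hz0, zero_mul, zero_mul]
    refine congrArg _ (le_antisymm hu.2 (not_lt.1 fun hslack => ?_))
    linarith [apply_nonpos_of_isMaxOn hmax hu hslack hi]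
  have hslackness : ∀ j, u j * y j = z * u j + max (y j - z) 0 := by
    intro j
    rcases le_or_gt (y j) z with hyz | hzy
    · rw [max_eq_right (by linarith)]
      rcases (hu.1 j).1.eq_or_lt with hj0 | hj_pos
      · rw [← hj0]; ring
      · rw [le_antisymm hyz (hz_le j hj_pos)]; ring
    · have hj1 : u j = 1 := (hu.1 j).2.eq_or_lt.resolve_right fun hj => (hz_ge j hj).not_gt hzy
      rw [max_eq_left (by linarith), hj1]; ring
  refine ⟨z, fun j => max (y j - z) 0, hz_nonneg, fun j => ⟨le_max_right _ _, ?_⟩, ?_⟩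
  · linarith [le_max_left (y j - z) 0]
  · rw [sum_congr rfl fun j _ => hslackness j, sum_add_distrib, ← mul_sum, hbudget]

end IsMaxOn

end BudgetedUncertainty

/-- Strong LP duality for the Bertsimas–Sim protection function:
`max { ∑ j, u j * y j : 0 ≤ u ≤ 1, ∑ j, u j ≤ Γ }`
equals
`min { z * Γ + ∑ j, p j : z ≥ 0, p j ≥ 0, z + p j ≥ y j }`,
and both the maximum and the minimum are attained. -/
theorem protection_function_duality
    (J : Type) [Fintype J] (y : J → ℝ) (hy : ∀ j, 0 ≤ y j)
    (Γ : ℝ) (hΓ : 0 ≤ Γ) :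
    ∃ M : ℝ,
      IsGreatest
        { s : ℝ | ∃ u : J → ℝ, (∀ j, 0 ≤ u j ∧ u j ≤ 1) ∧ (∑ j, u j) ≤ Γ ∧
            s = ∑ j, u j * y j } M ∧
      IsLeast
        { s : ℝ | ∃ (z : ℝ) (p : J → ℝ), 0 ≤ z ∧
            (∀ j, 0 ≤ p j ∧ y j ≤ z + p j) ∧
            s = z * Γ + ∑ j, p j } M := by
  obtain ⟨u, hu, hmax⟩ := exists_isMaxOn_budgetPolytope y hΓ
  obtain ⟨z, p, hz, hp, hval⟩ := exists_dual_certificate_of_isMaxOn hmax hy hu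
  refine ⟨∑ j, u j * y j, ⟨⟨u, hu.1, hu.2, rfl⟩, ?_⟩, ⟨⟨z, p, hz, hp, hval⟩, ?_⟩⟩
  · rintro _ ⟨v, hv, hvΓ, rfl⟩
    exact hmax ⟨hv, hvΓ⟩
  · rintro _ ⟨z', p', hz', hp', rfl⟩
    exact sum_mul_le_of_mem_budgetPolytope hu hz' hp'
end

section
/- Let n be a natural number, x, a, â ∈ ℝⁿ with âⱼ ≥ 0 for all j, b ∈ ℝ, and 0 ≤ Γ ≤ n. Then x satisfies Σⱼ (aⱼ + ηⱼ âⱼ) xⱼ ≤ b for every deviation vector η ∈ ℝⁿ with |ηⱼ| ≤ 1 for all j and Σⱼ |ηⱼ| ≤ Γ, if and only if Σⱼ aⱼ xⱼ + β(x, Γ) ≤ b, where β(x, Γ) := max { Σⱼ uⱼ âⱼ |xⱼ| : u ∈ ℝⁿ, 0 ≤ uⱼ ≤ 1 for all j, Σⱼ uⱼ ≤ Γ }. -/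
/-!
The worst case over the deviation vectors `η` of the uncertain part `∑ j, η j * ahat j * x j`
is exactly the protection value `β`. Each term is at most `|η j| * (ahat j * |x j|)` and `|η|`
is a feasible `u`, so the uncertain part never exceeds `β`; conversely a maximiser `u` is
attained by the deviation `η j = u j * sign (x j)`, which is feasible.
-/

open Finset

section ProtectionFunction

variable {ι : Type*} [Fintype ι]

/-- The protection function `β(x, Γ)` of the paper is the greatest element of this set. -/
def protectionValues (ahat x : ι → ℝ) (Γ : ℝ) : Set ℝ :=
  { s : ℝ | ∃ u : ι → ℝ, (∀ j, 0 ≤ u j ∧ u j ≤ 1) ∧ (∑ j, u j) ≤ Γ ∧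
      s = ∑ j, u j * (ahat j * |x j|) }

theorem abs_mul_sign_le {u : ℝ} (hu : 0 ≤ u) (x : ℝ) : |u * (SignType.sign x : ℝ)| ≤ u := by
  rw [abs_mul, abs_of_nonneg hu]
  refine mul_le_of_le_one_right hu ?_
  rcases SignType.sign x with _ | _ | _ <;> simp

theorem mul_mul_le_abs_mul_mul_abs (η x : ℝ) {c : ℝ} (hc : 0 ≤ c) :
    η * c * x ≤ |η| * (c * |x|) :=
  calc η * c * x ≤ |η * c * x| := le_abs_self _
    _ = |η| * (c * |x|) := by rw [abs_mul, abs_mul, abs_of_nonneg hc, mul_assoc]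

theorem sum_deviation_le_of_mem_upperBounds {ahat x : ι → ℝ} (hahat : ∀ j, 0 ≤ ahat j)
    {Γ β : ℝ} (hβ : β ∈ upperBounds (protectionValues ahat x Γ)) {η : ι → ℝ}
    (hη : ∀ j, |η j| ≤ 1) (hηΓ : ∑ j, |η j| ≤ Γ) :
    ∑ j, η j * ahat j * x j ≤ β :=
  calc ∑ j, η j * ahat j * x j ≤ ∑ j, |η j| * (ahat j * |x j|) :=
        sum_le_sum fun j _ => mul_mul_le_abs_mul_mul_abs _ _ (hahat j)
    _ ≤ β := hβ ⟨fun j => |η j|, fun j => ⟨abs_nonneg _, hη j⟩, hηΓ, rfl⟩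

theorem exists_deviation_sum_eq_of_mem {ahat x : ι → ℝ} {Γ β : ℝ}
    (hβ : β ∈ protectionValues ahat x Γ) :
    ∃ η : ι → ℝ, (∀ j, |η j| ≤ 1) ∧ ∑ j, |η j| ≤ Γ ∧ ∑ j, η j * ahat j * x j = β := by
  obtain ⟨u, hu, huΓ, rfl⟩ := hβ
  have hηu : ∀ j, |u j * (SignType.sign (x j) : ℝ)| ≤ u j := fun j => abs_mul_sign_le (hu j).1 _
  refine ⟨fun j => u j * SignType.sign (x j), fun j => (hηu j).trans (hu j).2,
    (sum_le_sum fun j _ => hηu j).trans huΓ, sum_congr rfl fun j _ => ?_⟩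
  rw [mul_comm _ (ahat j), mul_assoc, mul_assoc, ← mul_assoc, sign_mul_self]
  ring

end ProtectionFunction

theorem budgeted_uncertainty_robust_counterpart_general
    (n : ℕ) (x a ahat : Fin n → ℝ) (hahat : ∀ j, 0 ≤ ahat j) (b : ℝ)
    (Γ : ℝ) (β : ℝ)
    (hβ : IsGreatest
      { s : ℝ | ∃ u : Fin n → ℝ, (∀ j, 0 ≤ u j ∧ u j ≤ 1) ∧ (∑ j, u j) ≤ Γ ∧
          s = ∑ j, u j * (ahat j * |x j|) } β) :
    (∀ η : Fin n → ℝ, (∀ j, |η j| ≤ 1) → (∑ j, |η j|) ≤ Γ →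
        ∑ j, (a j + η j * ahat j) * x j ≤ b) ↔
      ∑ j, a j * x j + β ≤ b := by
  have sum_split : ∀ η : Fin n → ℝ,
      ∑ j, (a j + η j * ahat j) * x j = ∑ j, a j * x j + ∑ j, η j * ahat j * x j := fun η => by
    simp only [add_mul, sum_add_distrib]
  simp only [sum_split]
  constructor
  · intro h
    obtain ⟨η, hη, hηΓ, hηβ⟩ := exists_deviation_sum_eq_of_mem hβ.1
    simpa only [hηβ] using h η hη hηΓ
  · intro h η hη hηΓ
    linarith [sum_deviation_le_of_mem_upperBounds hahat hβ.2 hη hηΓ]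

/-- Bertsimas–Sim budgeted-uncertainty robust counterpart: `x` satisfies
`∑ j, (a j + η j * ahat j) * x j ≤ b` for every deviation vector `η` with
`|η j| ≤ 1` and `∑ j, |η j| ≤ Γ`, iff `∑ j, a j * x j + β ≤ b`, where
`β = β(x, Γ)` is the protection function
`max { ∑ j, u j * (ahat j * |x j|) : 0 ≤ u ≤ 1, ∑ j, u j ≤ Γ }`. -/
theorem budgeted_uncertainty_robust_counterpart
    (n : ℕ) (x a ahat : Fin n → ℝ) (hahat : ∀ j, 0 ≤ ahat j) (b : ℝ)
    (Γ : ℝ) (hΓ0 : 0 ≤ Γ) (hΓn : Γ ≤ (n : ℝ)) (β : ℝ)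
    (hβ : IsGreatest
      { s : ℝ | ∃ u : Fin n → ℝ, (∀ j, 0 ≤ u j ∧ u j ≤ 1) ∧ (∑ j, u j) ≤ Γ ∧
          s = ∑ j, u j * (ahat j * |x j|) } β) :
    (∀ η : Fin n → ℝ, (∀ j, |η j| ≤ 1) → (∑ j, |η j|) ≤ Γ →
        ∑ j, (a j + η j * ahat j) * x j ≤ b) ↔
      ∑ j, a j * x j + β ≤ b :=
  budgeted_uncertainty_robust_counterpart_general n x a ahat hahat b Γ β hβ
end
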